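/- arXiv:2405.01940 — 4 statements merged into one kernel-verified Lean document; each statement's English description precedes it below -/
import Mathlib

section
/- Let F : subdist → subdist be an additive map (the semantics of a loop body composed with restriction to B), i.e., F(μ) = ⟦C⟧(μ↓B). Define W(μ) = Σ_{i=0}^∞ (F^i(μ))↓¬B. If each ⟦C⟧ is mass-nonincreasing, then W(μ) is a well-defined subdistribution (the infinite sum converges pointwise and has total mass ≤ mass of μ), and W satisfies the fixed-point equation W(μ) = μ↓¬B + W(F(μ)). -/
open scoped ENNReal
open Classical in
noncomputable def restrict {S : Type*} (μ : S → ℝ≥0∞) (B : S → Prop) : S → ℝ≥0∞ :=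
  fun s => if B s then μ s else 0

/-! Each pass of the loop splits the current subdistribution into the part leaving the loop,
`ν↓¬B`, and the part fed to the body, whose image under `⟦C⟧` weighs at most `ν↓B`. Telescoping,
the mass leaving during the first `n` passes plus the mass still in the loop is at most `mass μ`,
so the whole output has mass at most `mass μ`. The fixed-point equation is the first term of
the series split off. -/

section Telescoping

variable {α : Type*} (F : α → α) (mass leak : α → ℝ≥0∞)

theorem sum_range_leak_iterate_add_mass_le (hstep : ∀ x, leak x + mass (F x) ≤ mass x)
    (n : ℕ) (x : α) : ∑ i ∈ Finset.range n, leak (F^[i] x) + mass (F^[n] x) ≤ mass x := by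
  induction n generalizing x with
  | zero => simp
  | succ n ih =>
    calc ∑ i ∈ Finset.range (n + 1), leak (F^[i] x) + mass (F^[n + 1] x)
        = leak x + (∑ i ∈ Finset.range n, leak (F^[i] (F x)) + mass (F^[n] (F x))) := by
          simp only [Finset.sum_range_succ', Function.iterate_succ_apply,
            Function.iterate_zero_apply]
          ring
      _ ≤ leak x + mass (F x) := by gcongr; exact ih (F x)
      _ ≤ mass x := hstep x

theorem tsum_leak_iterate_le (hstep : ∀ x, leak x + mass (F x) ≤ mass x) (x : α) :
    ∑' i, leak (F^[i] x) ≤ mass x := by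
  rw [ENNReal.tsum_eq_iSup_nat]
  exact iSup_le fun n =>
    le_trans le_self_add (sum_range_leak_iterate_add_mass_le F mass leak hstep n x)

end Telescoping

section Restrict

variable {S : Type*} (ν : S → ℝ≥0∞) (B : S → Prop)

theorem restrict_not_add_restrict (s : S) :
    restrict ν (fun s => ¬ B s) s + restrict ν B s = ν s := by
  by_cases hB : B s <;> simp [restrict, hB]

theorem tsum_restrict_not_add_tsum_restrict :
    ∑' s, restrict ν (fun s => ¬ B s) s + ∑' s, restrict ν B s = ∑' s, ν s := by
  rw [← ENNReal.tsum_add]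
  exact tsum_congr (restrict_not_add_restrict ν B)

theorem tsum_restrict_not_add_tsum_body_le (C : (S → ℝ≥0∞) → (S → ℝ≥0∞))
    (hmass : ∀ μ : S → ℝ≥0∞, ∑' s, C μ s ≤ ∑' s, μ s) :
    ∑' s, restrict ν (fun s => ¬ B s) s + ∑' s, C (restrict ν B) s ≤ ∑' s, ν s := by
  rw [← tsum_restrict_not_add_tsum_restrict ν B]
  exact add_le_add_right (hmass _) _

end Restrict

theorem stmt5_general {S : Type*}
    (C : (S → ℝ≥0∞) → (S → ℝ≥0∞))
    (hmass : ∀ μ : S → ℝ≥0∞, ∑' s, C μ s ≤ ∑' s, μ s)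
    (B : S → Prop) (μ : S → ℝ≥0∞) :
    (∑' s, ∑' i : ℕ,
        restrict ((fun ν => C (restrict ν B))^[i] μ) (fun s => ¬ B s) s) ≤ ∑' s, μ s ∧
    (fun s => ∑' i : ℕ,
        restrict ((fun ν => C (restrict ν B))^[i] μ) (fun s => ¬ B s) s)
      = fun s => restrict μ (fun s => ¬ B s) s + ∑' i : ℕ,
          restrict ((fun ν => C (restrict ν B))^[i] (C (restrict μ B)))
            (fun s => ¬ B s) s := by
  constructor
  · rw [ENNReal.tsum_comm]
    exact tsum_leak_iterate_le _ (fun ν => ∑' s, ν s)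
      (fun ν => ∑' s, restrict ν (fun s => ¬ B s) s)
      (fun ν => tsum_restrict_not_add_tsum_body_le ν B C hmass) μ
  · funext s
    rw [tsum_eq_zero_add' ENNReal.summable]
    simp only [Function.iterate_zero_apply, Function.iterate_succ_apply]

/-- For `F μ = ⟦C⟧(μ↓B)` with `⟦C⟧` additive and mass-nonincreasing, the sum
`W(μ) = Σᵢ (Fⁱ μ)↓¬B` has total mass at most that of `μ` (so `W μ` is a
subdistribution), and satisfies `W(μ) = μ↓¬B + W(F μ)`. -/
theorem stmt5 {S : Type*} [Countable S]
    (C : (S → ℝ≥0∞) → (S → ℝ≥0∞))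
    (hadd : ∀ μ ν, C (μ + ν) = C μ + C ν)
    (hmass : ∀ μ : S → ℝ≥0∞, ∑' s, C μ s ≤ ∑' s, μ s)
    (B : S → Prop) (μ : S → ℝ≥0∞) (hμ : ∑' s, μ s ≤ 1) :
    (∑' s, ∑' i : ℕ,
        restrict ((fun ν => C (restrict ν B))^[i] μ) (fun s => ¬ B s) s) ≤ ∑' s, μ s ∧
    (fun s => ∑' i : ℕ,
        restrict ((fun ν => C (restrict ν B))^[i] μ) (fun s => ¬ B s) s)
      = fun s => restrict μ (fun s => ¬ B s) s + ∑' i : ℕ,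
          restrict ((fun ν => C (restrict ν B))^[i] (C (restrict μ B)))
            (fun s => ¬ B s) s :=
  stmt5_general C hmass B μ
end

section
/- Soundness of the while rule: if {φ ∧ B}C{φ} is valid (universal-support semantics) then {φ}while B do C{φ ∧ ¬B} is valid. Concretely: if for every θ ∈ ⟦φ⟧ ∩ ⟦B⟧, supp(⟦C⟧δ_θ) ⊆ ⟦φ⟧, then for every θ ∈ ⟦φ⟧ and every i ≥ 0, supp((⟦C⟧∘↓B)^i(δ_θ)↓¬B) ⊆ ⟦φ⟧ ∩ (S \ ⟦B⟧), hence supp(⟦while B do C⟧δ_θ) ⊆ ⟦φ⟧ \ ⟦B⟧. -/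
open scoped ENNReal
def supp {S : Type*} (μ : S → ℝ≥0∞) : Set S := {s | 0 < μ s}

open Classical in
noncomputable def delta {S : Type*} (θ : S) : S → ℝ≥0∞ :=
  fun s => if s = θ then 1 else 0

noncomputable def whileSem {S : Type*} (C : (S → ℝ≥0∞) → (S → ℝ≥0∞))
    (B : Set S) (μ : S → ℝ≥0∞) : S → ℝ≥0∞ :=
  fun s => ∑' i : ℕ,
    restrict ((fun ν => C (restrict ν (· ∈ B)))^[i] μ) (fun s => s ∉ B) s

/-- Soundness of the while rule: if `{φ ∧ B}C{φ}` is valid then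
`{φ}while B do C{φ ∧ ¬B}` is valid; moreover every iterate restricted to `¬B`
is supported inside `φ ∩ Bᶜ`. -/
theorem stmt10 {S : Type*} [Countable S] (φ B : Set S)
    (C : (S → ℝ≥0∞) → (S → ℝ≥0∞))
    (hadd : ∀ μ ν, C (μ + ν) = C μ + C ν)
    (hmass : ∀ μ : S → ℝ≥0∞, ∑' s, C μ s ≤ ∑' s, μ s)
    (hsupp : ∀ μ : S → ℝ≥0∞, supp (C μ) ⊆ ⋃ θ ∈ supp μ, supp (C (delta θ)))
    (hbody : ∀ θ ∈ φ ∩ B, supp (C (delta θ)) ⊆ φ) :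
    ∀ θ ∈ φ,
      (∀ i : ℕ,
        supp (restrict ((fun ν => C (restrict ν (· ∈ B)))^[i] (delta θ))
          (fun s => s ∉ B)) ⊆ φ ∩ Bᶜ) ∧
      supp (whileSem C B (delta θ)) ⊆ φ \ B := by
  intro θ hθ
  have key : ∀ i, supp ((fun ν => C (restrict ν (· ∈ B)))^[i] (delta θ)) ⊆ φ := by
    intro i
    induction i with
    | zero =>
      intro s hs
      simp only [Function.iterate_zero, id_eq, supp, delta, Set.mem_setOf_eq] at hs
      split at hs
      · subst ‹s = θ›; exact hθ
      · simp at hs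
    | succ n ih =>
      rw [Function.iterate_succ_apply']
      intro s hs
      have h2 := hsupp (restrict ((fun ν => C (restrict ν (· ∈ B)))^[n] (delta θ)) (· ∈ B)) hs
      rcases Set.mem_iUnion₂.1 h2 with ⟨θ', hθ', hmem⟩
      have hθ'B : θ' ∈ B ∧ θ' ∈ φ := by
        simp only [supp, restrict, Set.mem_setOf_eq] at hθ'
        split at hθ'
        · exact ⟨‹_›, ih hθ'⟩
        · simp at hθ'
      exact hbody θ' ⟨hθ'B.2, hθ'B.1⟩ hmem
  have h1 : ∀ i, supp (restrict ((fun ν => C (restrict ν (· ∈ B)))^[i] (delta θ))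
      (fun s => s ∉ B)) ⊆ φ ∩ Bᶜ := by
    intro i s hs
    simp only [supp, restrict, Set.mem_setOf_eq] at hs
    split at hs
    · exact ⟨key i hs, ‹s ∉ B›⟩
    · simp at hs
  refine ⟨h1, ?_⟩
  intro s hs
  simp only [supp, whileSem, Set.mem_setOf_eq, pos_iff_ne_zero, Ne, ENNReal.tsum_eq_zero,
    not_forall] at hs
  rcases hs with ⟨i, hi⟩
  have := h1 i (show s ∈ supp _ from pos_iff_ne_zero.2 hi)
  exact ⟨this.1, this.2⟩
end

section
/- Characterization of the weakest precondition for while-loops: define ψ₀ = S (all states) and ψ_{i+1} = (B ∩ wp(C, ψ_i)) ∪ ((S\B) ∩ φ), where wp(C, A) = {θ : supp(⟦C⟧δ_θ) ⊆ A}. Then for every pure state θ: θ ∈ ∩_{i≥0} ψ_i if and only if supp(⟦while B do C⟧δ_θ) ⊆ φ ... under the assumption that wp(C,·) distributes over countable intersections (wp(C, ∩A_i) = ∩ wp(C, A_i)) and ⟦C⟧ is additive with supp(⟦C⟧μ) = ∪_{θ∈supp μ} supp(⟦C⟧δ_θ). -/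
open scoped ENNReal
/-- The weakest precondition of a pure state w.r.t. a program `C` and a
postcondition `A`. -/
def wp {S : Type*} (C : (S → ℝ≥0∞) → (S → ℝ≥0∞)) (A : Set S) : Set S :=
  {θ | supp (C (delta θ)) ⊆ A}

lemma supp_delta {S : Type*} (θ : S) : supp (delta θ) = {θ} := by
  ext s
  simp only [supp, delta, Set.mem_setOf_eq, Set.mem_singleton_iff]
  split_ifs with h <;> simp [h]

lemma supp_restrict {S : Type*} (μ : S → ℝ≥0∞) (P : S → Prop) :
    supp (restrict μ P) = supp μ ∩ {s | P s} := by
  ext s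
  simp only [supp, restrict, Set.mem_setOf_eq, Set.mem_inter_iff]
  split_ifs with h <;> simp [h]

/-- Characterization of the weakest precondition for while-loops: with
`ψ₀ = S` and `ψ_{i+1} = (B ∩ wp(C,ψᵢ)) ∪ ((S\B) ∩ φ)`, a pure state `θ`
satisfies every `ψᵢ` iff `supp (⟦while B do C⟧ δ_θ) ⊆ φ`, assuming `wp(C,·)`
distributes over countable intersections and `⟦C⟧` is additive with
`supp (⟦C⟧ μ) = ⋃_{θ ∈ supp μ} supp (⟦C⟧ δ_θ)`. -/
theorem stmt11 {S : Type*} [Countable S] (φ B : Set S)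
    (C : (S → ℝ≥0∞) → (S → ℝ≥0∞))
    (hadd : ∀ μ ν, C (μ + ν) = C μ + C ν)
    (hmass : ∀ μ : S → ℝ≥0∞, ∑' s, C μ s ≤ ∑' s, μ s)
    (hsupp : ∀ μ : S → ℝ≥0∞, supp (C μ) = ⋃ θ ∈ supp μ, supp (C (delta θ)))
    (hwpInter : ∀ A : ℕ → Set S, wp C (⋂ i, A i) = ⋂ i, wp C (A i))
    (ψ : ℕ → Set S)
    (hψ0 : ψ 0 = Set.univ)
    (hψs : ∀ i, ψ (i + 1) = (B ∩ wp C (ψ i)) ∪ (Bᶜ ∩ φ)) :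
    ∀ θ : S, (θ ∈ ⋂ i, ψ i) ↔ supp (whileSem C B (delta θ)) ⊆ φ := by
  classical
  set F : (S → ℝ≥0∞) → (S → ℝ≥0∞) := fun ν => C (restrict ν (· ∈ B)) with hF
  -- C 0 = 0
  have hC0 : C 0 = 0 := by
    have h := hmass 0
    rw [show ∑' s, (0 : S → ℝ≥0∞) s = 0 by simp] at h
    funext s
    exact ENNReal.tsum_eq_zero.mp (le_zero_iff.mp h) s
  have hres0 : restrict (0 : S → ℝ≥0∞) (· ∈ B) = 0 := by
    funext s; simp [restrict]
  have hF0 : F 0 = 0 := by simp [hF, hres0, hC0]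
  -- F on deltas
  have hFdelta_mem : ∀ θ ∈ B, F (delta θ) = C (delta θ) := by
    intro θ hθ
    have : restrict (delta θ) (· ∈ B) = delta θ := by
      funext s
      by_cases h2 : s = θ
      · subst h2; simp [restrict, delta, hθ]
      · simp [restrict, delta, h2]
    simp [hF, this]
  have hFdelta_notmem : ∀ θ, θ ∉ B → F (delta θ) = 0 := by
    intro θ hθ
    have : restrict (delta θ) (· ∈ B) = 0 := by
      funext s
      by_cases h2 : s = θ
      · subst h2; simp [restrict, delta, hθ]
      · simp [restrict, delta, h2]
    simp [hF, this, hC0]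
  -- supp (F μ) decomposes over supp μ
  have hsuppF : ∀ μ : S → ℝ≥0∞, supp (F μ) = ⋃ η ∈ supp μ, supp (F (delta η)) := by
    intro μ
    have : supp (F μ) = ⋃ η ∈ supp (restrict μ (· ∈ B)), supp (C (delta η)) := hsupp _
    rw [this, supp_restrict]
    ext s
    simp only [Set.mem_iUnion, Set.mem_inter_iff, Set.mem_setOf_eq]
    constructor
    · rintro ⟨η, ⟨hη, hηB⟩, hs⟩
      exact ⟨η, hη, by rwa [hFdelta_mem η hηB]⟩
    · rintro ⟨η, hη, hs⟩
      by_cases hηB : η ∈ B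
      · exact ⟨η, ⟨hη, hηB⟩, by rwa [hFdelta_mem η hηB] at hs⟩
      · rw [hFdelta_notmem η hηB] at hs
        simp [supp] at hs
  -- iterates
  have hiter : ∀ (n : ℕ) (μ : S → ℝ≥0∞),
      supp (F^[n] μ) = ⋃ η ∈ supp μ, supp (F^[n] (delta η)) := by
    intro n
    induction n with
    | zero =>
      intro μ
      ext s
      simp only [Function.iterate_zero, id_eq, Set.mem_iUnion, supp_delta,
        Set.mem_singleton_iff]
      constructor
      · intro hs; exact ⟨s, hs, rfl⟩
      · rintro ⟨η, hη, rfl⟩; exact hη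
    | succ n IH =>
      intro μ
      simp only [Function.iterate_succ_apply]
      rw [IH]
      ext s
      simp only [Set.mem_iUnion]
      constructor
      · rintro ⟨η, hη, hs⟩
        rw [hsuppF] at hη
        simp only [Set.mem_iUnion] at hη
        obtain ⟨ρ, hρ, hηρ⟩ := hη
        refine ⟨ρ, hρ, ?_⟩
        rw [IH]
        simp only [Set.mem_iUnion]
        exact ⟨η, hηρ, hs⟩
      · rintro ⟨ρ, hρ, hs⟩
        rw [IH] at hs
        simp only [Set.mem_iUnion] at hs
        obtain ⟨η, hη, hs⟩ := hs
        refine ⟨η, ?_, hs⟩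
        rw [hsuppF]
        simp only [Set.mem_iUnion]
        exact ⟨ρ, hρ, hη⟩
  have hiter0 : ∀ (n : ℕ), F^[n] (0 : S → ℝ≥0∞) = 0 := by
    intro n
    induction n with
    | zero => rfl
    | succ n IH => rw [Function.iterate_succ_apply, hF0, IH]
  -- main characterization of ψ levels
  have hmain : ∀ (n : ℕ) (θ : S), θ ∈ ψ n ↔
      ∀ i < n, ∀ s ∈ supp (F^[i] (delta θ)), s ∉ B → s ∈ φ := by
    intro n
    induction n with
    | zero => intro θ; simp [hψ0]
    | succ n IH =>
      intro θ
      rw [hψs n]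
      by_cases hθB : θ ∈ B
      · simp only [Set.mem_union, Set.mem_inter_iff, hθB, true_and,
          Set.mem_compl_iff, not_true, false_and, or_false]
        constructor
        · intro hwp i hi s hs hsB
          cases i with
          | zero =>
            simp only [Function.iterate_zero, id_eq, supp_delta,
              Set.mem_singleton_iff] at hs
            exact absurd (hs ▸ hθB) hsB
          | succ i =>
            rw [Function.iterate_succ_apply, hFdelta_mem θ hθB, hiter] at hs
            simp only [Set.mem_iUnion] at hs
            obtain ⟨η, hη, hs⟩ := hs
            have hηψ : η ∈ ψ n := hwp hη
            exact (IH η).mp hηψ i (Nat.lt_of_succ_lt_succ hi) s hs hsB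
        · intro h η hη
          rw [IH η]
          intro i hi s hs hsB
          refine h (i + 1) (Nat.succ_lt_succ hi) s ?_ hsB
          rw [Function.iterate_succ_apply, hFdelta_mem θ hθB, hiter]
          simp only [Set.mem_iUnion]
          exact ⟨η, hη, hs⟩
      · simp only [Set.mem_union, Set.mem_inter_iff, hθB, false_and,
          Set.mem_compl_iff, not_false_iff, true_and, false_or]
        constructor
        · intro hφ i hi s hs hsB
          cases i with
          | zero =>
            simp only [Function.iterate_zero, id_eq, supp_delta,
              Set.mem_singleton_iff] at hs
            exact hs ▸ hφ
          | succ i =>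
            rw [Function.iterate_succ_apply, hFdelta_notmem θ hθB, hiter0] at hs
            simp [supp] at hs
        · intro h
          exact h 0 (Nat.succ_pos n) θ (by simp [supp_delta]) hθB
  -- supp of whileSem
  intro θ
  have hwhile : supp (whileSem C B (delta θ)) ⊆ φ ↔
      ∀ i, ∀ s ∈ supp (F^[i] (delta θ)), s ∉ B → s ∈ φ := by
    constructor
    · intro h i s hs hsB
      apply h
      simp only [supp, whileSem, Set.mem_setOf_eq]
      rw [pos_iff_ne_zero]
      intro hzero
      rw [ENNReal.tsum_eq_zero] at hzero
      have := hzero i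
      simp only [restrict, hsB, not_false_iff, if_pos] at this
      rw [show (fun ν => C (restrict ν (· ∈ B))) = F from rfl] at this
      exact absurd this (ne_of_gt hs)
    · intro h s hs
      simp only [supp, whileSem, Set.mem_setOf_eq, pos_iff_ne_zero] at hs
      have : ∃ i, restrict ((fun ν => C (restrict ν (· ∈ B)))^[i] (delta θ))
          (fun s => s ∉ B) s ≠ 0 := by
        by_contra hc
        push_neg at hc
        exact hs (ENNReal.tsum_eq_zero.mpr hc)
      obtain ⟨i, hi⟩ := this
      rw [show (fun ν => C (restrict ν (· ∈ B))) = F from rfl] at hi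
      simp only [restrict] at hi
      by_cases hsB : s ∈ B
      · simp [hsB] at hi
      · simp only [hsB, not_false_iff, if_pos] at hi
        exact h i s (pos_iff_ne_zero.mpr hi) hsB
  rw [hwhile]
  simp only [Set.mem_iInter]
  constructor
  · intro h i s hs hsB
    exact (hmain (i + 1) θ).mp (h (i + 1)) i (Nat.lt_succ_self i) s hs hsB
  · intro h n
    exact (hmain n θ).mpr (fun i _ s hs hsB => h i s hs hsB)
end

section
/- Deutsch's algorithm correctness for constant f (state computation): let H be the Hadamard gate, and suppose f : {0,1} → {0,1} is constant, so U_f ∈ {I⊗I, I⊗X}. Then measuring the first qubit of (H⊗I) U_f (H⊗H) (|0⟩⊗|1⟩) in the computational basis yields outcome 0 with probability 1; i.e., (P⁰⊗I) applied to that vector equals the vector itself (the vector lies in the range of P⁰⊗I). -/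
open Kronecker

noncomputable def Hmat : Matrix (Fin 2) (Fin 2) ℂ :=
  ((Real.sqrt 2 : ℂ))⁻¹ • !![1, 1; 1, -1]

def Xmat : Matrix (Fin 2) (Fin 2) ℂ := !![0, 1; 1, 0]

def P0mat : Matrix (Fin 2) (Fin 2) ℂ := !![1, 0; 0, 0]

/-- The oracle `U_f : |x⟩⊗|y⟩ ↦ |x⟩⊗|y ⊕ f(x)⟩`. -/
def Uf (f : Fin 2 → Fin 2) : Matrix (Fin 2 × Fin 2) (Fin 2 × Fin 2) ℂ :=
  fun p q => if p.1 = q.1 ∧ p.2 = q.2 + f q.1 then 1 else 0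

def ket0 : Fin 2 → ℂ := ![1, 0]
def ket1 : Fin 2 → ℂ := ![0, 1]

/-- Deutsch's algorithm, constant case: for constant `f`, the final state
`(H⊗I) U_f (H⊗H) (|0⟩⊗|1⟩)` lies in the range of `P⁰⊗I`, i.e. measuring the
first qubit yields outcome `0` with probability 1. -/
theorem stmt18 (f : Fin 2 → Fin 2) (hf : ∀ x y, f x = f y) :
    (P0mat ⊗ₖ (1 : Matrix (Fin 2) (Fin 2) ℂ)).mulVec
        ((Hmat ⊗ₖ (1 : Matrix (Fin 2) (Fin 2) ℂ)).mulVec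
          ((Uf f).mulVec ((Hmat ⊗ₖ Hmat).mulVec (fun p => ket0 p.1 * ket1 p.2))))
      = (Hmat ⊗ₖ (1 : Matrix (Fin 2) (Fin 2) ℂ)).mulVec
          ((Uf f).mulVec ((Hmat ⊗ₖ Hmat).mulVec (fun p => ket0 p.1 * ket1 p.2))) := by
  have h2 : (Real.sqrt 2 : ℂ) ≠ 0 := by norm_cast; positivity
  have h0 : f = fun _ => f 0 := funext fun x => hf x 0
  rcases (show f 0 = 0 ∨ f 0 = 1 by omega) with h | h <;> rw [h0, h] <;>
  · funext p
    obtain ⟨i, j⟩ := p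
    simp only [Matrix.mulVec, dotProduct, Fintype.sum_prod_type, Fin.sum_univ_two,
      Matrix.kroneckerMap_apply, Uf, Hmat, P0mat, ket0, ket1, Matrix.smul_apply,
      Matrix.one_apply, Matrix.cons_val', Matrix.cons_val_zero, Matrix.cons_val_one,
      Matrix.head_cons, Matrix.empty_val', Matrix.cons_val_fin_one, Matrix.head_fin_const,
      smul_eq_mul]
    fin_cases i <;> fin_cases j <;> simp
end
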